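/- arXiv:2204.07428 — 2 statements merged into one kernel-verified Lean document; each statement's English description precedes it below -/
import Mathlib

section
/- Let 𝒜 be an assessment and let P ⊆ Σ be any set of probability mass functions such that C^E_P agrees with 𝒜 (i.e., C^E_P(V ∪ W) ⊆ V for all (V,W) ∈ 𝒜). Then for every nonempty finite set A of options, C^E_P(A) ⊆ C^E_{P(𝒜)}(A); that is, C^E_{P(𝒜)} is the most conservative choice function under E-admissibility that agrees with 𝒜. -/
/-- A probability mass function on a finite outcome space `X`:
a map into `[0,1]` whose values sum to one. -/
def IsPMF {X : Type*} [Fintype X] (p : X → ℝ) : Prop :=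
  (∀ x, 0 ≤ p x ∧ p x ≤ 1) ∧ ∑ x, p x = 1

/-- The expectation `E_p(u) = ∑_x u(x) p(x)` of an option `u : X → ℝ`
with respect to a probability mass function `p`. -/
noncomputable def Ep {X : Type*} [Fintype X] (p u : X → ℝ) : ℝ := ∑ x, u x * p x

/-- `Cp p A = {u ∈ A : ∀ a ∈ A, E_p(u) ≥ E_p(a)}`, the options in `A`
maximising expected utility with respect to `p`. -/
def Cp {X : Type*} [Fintype X] (p : X → ℝ) (A : Set (X → ℝ)) : Set (X → ℝ) :=
  {u | u ∈ A ∧ ∀ a ∈ A, Ep p a ≤ Ep p u}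

/-- `CE P A = ⋃_{p ∈ P} Cp p A`, the choice function under E-admissibility. -/
def CE {X : Type*} [Fintype X] (P : Set (X → ℝ)) (A : Set (X → ℝ)) : Set (X → ℝ) :=
  ⋃ p ∈ P, Cp p A

/-- An assessment is a set of pairs `(V, W)` of disjoint nonempty finite sets of options. -/
def IsAssessment {X : Type*} (𝒜 : Set (Set (X → ℝ) × Set (X → ℝ))) : Prop :=
  ∀ VW ∈ 𝒜, Disjoint VW.1 VW.2 ∧ VW.1.Finite ∧ VW.1.Nonempty ∧ VW.2.Finite ∧ VW.2.Nonempty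

/-- The credal set `P(𝒜) = {p ∈ Σ : ∀ (V,W) ∈ 𝒜, C_p(V ∪ W) ⊆ V}` of an assessment `𝒜`. -/
def credal {X : Type*} [Fintype X] (𝒜 : Set (Set (X → ℝ) × Set (X → ℝ))) : Set (X → ℝ) :=
  {p | IsPMF p ∧ ∀ VW ∈ 𝒜, Cp p (VW.1 ∪ VW.2) ⊆ VW.1}

/-- the E-admissible extension of 𝒜 is the most conservative choice
function under E-admissibility that agrees with 𝒜. -/
theorem stmt_6 {X : Type*} [Fintype X] [Nonempty X]
    (𝒜 : Set (Set (X → ℝ) × Set (X → ℝ))) (h𝒜 : IsAssessment 𝒜)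
    (P : Set (X → ℝ)) (hP : ∀ p ∈ P, IsPMF p)
    (hagrees : ∀ VW ∈ 𝒜, CE P (VW.1 ∪ VW.2) ⊆ VW.1)
    (A : Set (X → ℝ)) (hAfin : A.Finite) (hAne : A.Nonempty) :
    CE P A ⊆ CE (credal 𝒜) A := by
  intro u hu
  simp only [CE, Set.mem_iUnion] at hu ⊢
  obtain ⟨p, hpP, hup⟩ := hu
  refine ⟨p, ⟨hP p hpP, fun VW hVW => ?_⟩, hup⟩
  exact fun v hv => hagrees VW hVW (Set.mem_iUnion.mpr ⟨p, Set.mem_iUnion.mpr ⟨hpP, hv⟩⟩)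
end

section
/- Let 𝒜 be a nonempty finite assessment and enumerate the set {{v − w : v ∈ V} : (V,W) ∈ 𝒜, w ∈ W} as {D_1, …, D_m}. For a tuple d = (d_1, …, d_m) with d_j ∈ D_j for each j, let P(d) = {p ∈ Σ : E_p(d_j) > 0 for all j ∈ {1,…,m}}. Then P(𝒜) = ⋃_{d ∈ D_1 × ⋯ × D_m} P(d). -/
lemma Ep_sub {X : Type*} [Fintype X] (p v w : X → ℝ) :
    Ep p (v - w) = Ep p v - Ep p w := by
  simp [Ep, sub_mul, Finset.sum_sub_distrib]

/-- Theorem 1, first part: with the set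
{ {v − w : v ∈ V} : (V,W) ∈ 𝒜, w ∈ W } enumerated as D_1, …, D_m, the credal set
P(𝒜) is the union over all selections d ∈ D_1 × ⋯ × D_m of the sets
P(d) = {p ∈ Σ : E_p(d_j) > 0 for all j}. -/
theorem stmt_7 {X : Type*} [Fintype X] [Nonempty X]
    (𝒜 : Set (Set (X → ℝ) × Set (X → ℝ))) (h𝒜 : IsAssessment 𝒜)
    (h𝒜fin : 𝒜.Finite) (h𝒜ne : 𝒜.Nonempty)
    (m : ℕ) (D : Fin m → Set (X → ℝ))
    (henum : Set.range D =
      {S | ∃ VW ∈ 𝒜, ∃ w ∈ VW.2, S = (fun v => v - w) '' VW.1}) :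
    credal 𝒜 =
      ⋃ d ∈ {d : Fin m → (X → ℝ) | ∀ j, d j ∈ D j},
        {p | IsPMF p ∧ ∀ j, 0 < Ep p (d j)} := by
  ext p
  simp only [Set.mem_iUnion, Set.mem_setOf_eq, exists_prop]
  constructor
  · rintro ⟨hpmf, hcred⟩
    have key : ∀ j : Fin m, ∃ e ∈ D j, 0 < Ep p e := by
      intro j
      have hj : D j ∈ Set.range D := ⟨j, rfl⟩
      rw [henum] at hj
      obtain ⟨VW, hVW, w, hw, hS⟩ := hj
      obtain ⟨hdisj, hVfin, hVne, hWfin, hWne⟩ := h𝒜 VW hVW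
      -- get a maximizer of Ep p over V ∪ W
      obtain ⟨u, hu, humax⟩ := Set.exists_max_image (VW.1 ∪ VW.2) (Ep p)
        (hVfin.union hWfin) (hVne.mono Set.subset_union_left)
      have huC : u ∈ Cp p (VW.1 ∪ VW.2) := ⟨hu, humax⟩
      have huV : u ∈ VW.1 := hcred VW hVW huC
      have hlt : Ep p w < Ep p u := by
        rcases lt_or_eq_of_le (humax w (Set.mem_union_right _ hw)) with h | h
        · exact h
        · exfalso
          have hwC : w ∈ Cp p (VW.1 ∪ VW.2) :=
            ⟨Set.mem_union_right _ hw, fun a ha => h ▸ humax a ha⟩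
          exact hdisj.ne_of_mem (hcred VW hVW hwC) hw rfl
      refine ⟨u - w, ?_, ?_⟩
      · rw [hS]; exact ⟨u, huV, rfl⟩
      · rw [Ep_sub]; linarith
    choose d hd hpos using key
    exact ⟨d, hd, hpmf, hpos⟩
  · rintro ⟨d, hd, hpmf, hpos⟩
    refine ⟨hpmf, fun VW hVW u huC => ?_⟩
    obtain ⟨hu, humax⟩ := huC
    rcases hu with huV | huW
    · exact huV
    · exfalso
      have hS : ((fun v => v - u) '' VW.1) ∈ Set.range D := by
        rw [henum]; exact ⟨VW, hVW, u, huW, rfl⟩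
      obtain ⟨j, hj⟩ := hS
      have := hd j
      rw [hj] at this
      obtain ⟨v, hvV, hveq⟩ := this
      have h1 : 0 < Ep p (d j) := hpos j
      rw [← hveq, Ep_sub] at h1
      have h2 : Ep p v ≤ Ep p u := humax v (Set.mem_union_left _ hvV)
      linarith
end
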